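/- arXiv:2310.14129 — 2 statements merged into one kernel-verified Lean document; each statement's English description precedes it below -/
import Mathlib

section
/- For every probability vector w on [n] and bandit instance μ with unique best arm 1, inf over alternative instances λ with best arm different from 1 of ∑_{i=1}^n w_i d(μ_i, λ_i) equals min over i ≠ 1 of (w₁ + w_i)·I_{w₁/(w₁+w_i)}(μ₁, μ_i), where I_c(μ,μ') = c·d(μ, cμ+(1−c)μ') + (1−c)·d(μ', cμ+(1−c)μ'). -/
/-!
An alternative must have `λ i > λ 0` for some arm `i ≠ 0`; the other arms can be left at `μ j`
at no cost, so the problem splits into two-arm problems. For weights `u, v` and the weighted mean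
`m = (u a + v b) / (u + v)`,
`u d(a, t) + v d(b, t) = u d(a, m) + v d(b, m) + (u + v) d(m, t)`,
and `d(a, ·)` decreases up to `a` and increases after it. Hence, when `b ≤ a` and `x ≤ y`, the
cost `u d(a, x) + v d(b, y)` is at least its value at `x = y = m`, which is approached by
`x = m < y → m`.
-/

open Set Filter Topology intervalIntegral

-- The KL divergence of the exponential family with variance function `V`, in mean parameters.
noncomputable def expFamKL (V : ℝ → ℝ) (x y : ℝ) : ℝ := ∫ z in x..y, (z - x) / V z

-- The paper's `I_c(a, b)`.
noncomputable def jensenShannon (V : ℝ → ℝ) (c a b : ℝ) : ℝ :=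
  c * expFamKL V a (c * a + (1 - c) * b) + (1 - c) * expFamKL V b (c * a + (1 - c) * b)

@[simp]
lemma expFamKL_self (V : ℝ → ℝ) (a : ℝ) : expFamKL V a a = 0 :=
  integral_same

lemma mul_jensenShannon_div_add {u v : ℝ} (hu : 0 ≤ u) (hv : 0 ≤ v) (V : ℝ → ℝ) (a b : ℝ) :
    (u + v) * jensenShannon V (u / (u + v)) a b =
      u * expFamKL V a ((u * a + v * b) / (u + v)) +
        v * expFamKL V b ((u * a + v * b) / (u + v)) := by
  rcases (add_nonneg hu hv).eq_or_lt with huv | huv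
  · obtain ⟨rfl, rfl⟩ : u = 0 ∧ v = 0 := by constructor <;> linarith
    simp
  have hmean : u / (u + v) * a + (1 - u / (u + v)) * b = (u * a + v * b) / (u + v) := by
    field_simp; ring
  have hv' : (u + v) * (1 - u / (u + v)) = v := by field_simp; ring
  rw [jensenShannon, hmean, mul_add, ← mul_assoc, ← mul_assoc, mul_div_cancel₀ _ huv.ne', hv']

section

variable {V : ℝ → ℝ} (hV : ∀ z, 0 < V z) (hVc : Continuous V)
include hV hVc

lemma intervalIntegrable_sub_div (a x y : ℝ) :
    IntervalIntegrable (fun z => (z - a) / V z) MeasureTheory.volume x y :=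
  ((continuous_id.sub continuous_const).div hVc fun z => (hV z).ne').intervalIntegrable x y

lemma expFamKL_sub_expFamKL (a s t : ℝ) :
    expFamKL V a t - expFamKL V a s = ∫ z in s..t, (z - a) / V z :=
  integral_interval_sub_left (intervalIntegrable_sub_div hV hVc a a t)
    (intervalIntegrable_sub_div hV hVc a a s)

lemma monotoneOn_expFamKL (a : ℝ) : MonotoneOn (expFamKL V a) (Ici a) := by
  intro s hs t _ hst
  have := expFamKL_sub_expFamKL hV hVc a s t
  have : 0 ≤ ∫ z in s..t, (z - a) / V z :=
    integral_nonneg hst fun z hz => div_nonneg (by linarith [hz.1, mem_Ici.1 hs]) (hV z).le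
  linarith

lemma antitoneOn_expFamKL (a : ℝ) : AntitoneOn (expFamKL V a) (Iic a) := by
  intro s _ t ht hst
  have := expFamKL_sub_expFamKL hV hVc a s t
  have : 0 ≤ ∫ z in s..t, -((z - a) / V z) :=
    integral_nonneg hst fun z hz =>
      neg_nonneg.2 (div_nonpos_of_nonpos_of_nonneg (by linarith [hz.2, mem_Iic.1 ht]) (hV z).le)
  rw [integral_neg] at this
  linarith

lemma expFamKL_nonneg (a t : ℝ) : 0 ≤ expFamKL V a t := by
  rcases le_total a t with h | h
  · simpa using monotoneOn_expFamKL hV hVc a (le_refl a) h h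
  · simpa using antitoneOn_expFamKL hV hVc a h (le_refl a) h

lemma continuous_expFamKL (a : ℝ) : Continuous (expFamKL V a) :=
  continuous_primitive (intervalIntegrable_sub_div hV hVc a) a

lemma expFamKL_weighted_add {u v : ℝ} (huv : u + v ≠ 0) (a b t : ℝ) :
    u * expFamKL V a t + v * expFamKL V b t =
      u * expFamKL V a ((u * a + v * b) / (u + v)) +
        v * expFamKL V b ((u * a + v * b) / (u + v)) +
          (u + v) * expFamKL V ((u * a + v * b) / (u + v)) t := by
  set m := (u * a + v * b) / (u + v)
  have hm : u * a + v * b = (u + v) * m := by simp only [m]; field_simp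
  have ha := expFamKL_sub_expFamKL hV hVc a m t
  have hb := expFamKL_sub_expFamKL hV hVc b m t
  have hmt := expFamKL_sub_expFamKL hV hVc m m t
  rw [expFamKL_self, sub_zero] at hmt
  have hint : u * (∫ z in m..t, (z - a) / V z) + v * ∫ z in m..t, (z - b) / V z
      = (u + v) * ∫ z in m..t, (z - m) / V z := by
    rw [← integral_const_mul, ← integral_const_mul, ← integral_const_mul,
      ← integral_add ((intervalIntegrable_sub_div hV hVc a m t).const_mul u)
        ((intervalIntegrable_sub_div hV hVc b m t).const_mul v)]
    -- `u (z - a) + v (z - b) = (u + v) (z - m)`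
    refine integral_congr fun z _ => ?_
    have := (hV z).ne'
    field_simp
    linear_combination -hm
  linear_combination u * ha + v * hb - (u + v) * hmt + hint

lemma weighted_expFamKL_mean_le {u v : ℝ} (hu : 0 ≤ u) (hv : 0 ≤ v) {a b x y : ℝ}
    (hba : b ≤ a) (hxy : x ≤ y) :
    u * expFamKL V a ((u * a + v * b) / (u + v)) + v * expFamKL V b ((u * a + v * b) / (u + v)) ≤
      u * expFamKL V a x + v * expFamKL V b y := by
  rcases (add_nonneg hu hv).eq_or_lt with huv | huv
  · obtain ⟨rfl, rfl⟩ : u = 0 ∧ v = 0 := by constructor <;> linarith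
    simp
  set m := (u * a + v * b) / (u + v)
  have hbm : b ≤ m := by rw [le_div_iff₀ huv]; nlinarith
  have hma : m ≤ a := by rw [div_le_iff₀ huv]; nlinarith
  have mean_le (t : ℝ) : u * expFamKL V a m + v * expFamKL V b m ≤
      u * expFamKL V a t + v * expFamKL V b t := by
    have := expFamKL_weighted_add hV hVc huv.ne' a b t
    have := mul_nonneg huv.le (expFamKL_nonneg hV hVc m t)
    linarith
  rcases le_or_gt m x with hmx | hxm
  · have := monotoneOn_expFamKL hV hVc b (hbm.trans hmx) (hbm.trans (hmx.trans hxy)) hxy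
    nlinarith [mean_le x]
  rcases le_or_gt y m with hym | hmy
  · have := antitoneOn_expFamKL hV hVc a (hxy.trans (hym.trans hma)) (hym.trans hma) hxy
    nlinarith [mean_le y]
  have := antitoneOn_expFamKL hV hVc a (hxm.le.trans hma) hma hxm.le
  have := monotoneOn_expFamKL hV hVc b hbm (hbm.trans hmy.le) hmy.le
  nlinarith

lemma isGLB_weighted_expFamKL {u v : ℝ} (hu : 0 ≤ u) (hv : 0 ≤ v) {a b : ℝ} (hba : b ≤ a) :
    IsGLB {s | ∃ x y, x < y ∧ s = u * expFamKL V a x + v * expFamKL V b y}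
      ((u + v) * jensenShannon V (u / (u + v)) a b) := by
  rw [mul_jensenShannon_div_add hu hv]
  set m := (u * a + v * b) / (u + v)
  refine ⟨?_, fun c hc => ?_⟩
  · rintro _ ⟨x, y, hxy, rfl⟩
    exact weighted_expFamKL_mean_le hV hVc hu hv hba hxy.le
  have hlim : Tendsto (fun t => u * expFamKL V a m + v * expFamKL V b t) (𝓝[>] m)
      (𝓝 (u * expFamKL V a m + v * expFamKL V b m)) :=
    ((continuous_const.add (continuous_const.mul (continuous_expFamKL hV hVc b))).tendsto m).mono_left
      nhdsWithin_le_nhds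
  refine ge_of_tendsto hlim ?_
  filter_upwards [self_mem_nhdsWithin] with t ht
  exact hc ⟨m, t, ht, rfl⟩

end

lemma isGLB_sum_of_isGLB_pair {ι : Type*} [Fintype ι] [DecidableEq ι] {D : ℝ → ℝ → ℝ}
    (hD_self : ∀ x, D x x = 0) (hD_nonneg : ∀ x y, 0 ≤ D x y) {w μ : ι → ℝ}
    (hw : ∀ k, 0 ≤ w k) {i j : ι} (hij : i ≠ j) {g : ℝ}
    (hg : IsGLB {s | ∃ x y, x < y ∧ s = w i * D (μ i) x + w j * D (μ j) y} g) :
    IsGLB {s | ∃ lam : ι → ℝ, lam i < lam j ∧ s = ∑ k, w k * D (μ k) (lam k)} g := by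
  refine ⟨?_, fun c hc => hg.2 ?_⟩
  · rintro _ ⟨lam, hlt, rfl⟩
    exact (hg.1 ⟨lam i, lam j, hlt, rfl⟩).trans
      (Finset.add_le_sum (fun k _ => mul_nonneg (hw k) (hD_nonneg _ _))
        (Finset.mem_univ i) (Finset.mem_univ j) hij)
  rintro _ ⟨x, y, hxy, rfl⟩
  set lam := Function.update (Function.update μ i x) j y
  have hsum : ∑ k, w k * D (μ k) (lam k) = w i * D (μ i) x + w j * D (μ j) y := by
    rw [Fintype.sum_eq_add i j hij fun k hk => by simp [lam, hk.1, hk.2, hD_self]]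
    simp [lam, hij]
  exact hsum ▸ hc ⟨lam, by simpa [lam, hij, hij.symm] using hxy, rfl⟩

theorem stmt9_general (n : ℕ) [NeZero n] (hn : 2 ≤ n) (V : ℝ → ℝ) (hVpos : ∀ z, 0 < V z)
    (hVc : Continuous V)
    (d : ℝ → ℝ → ℝ) (hd : ∀ x y, d x y = ∫ z in x..y, (z - x) / V z)
    (μ : Fin n → ℝ) (hμ : ∀ i, i ≠ 0 → μ i < μ 0)
    (w : Fin n → ℝ) (hw0 : ∀ i, 0 ≤ w i) :
    sInf {v : ℝ | ∃ lam : Fin n → ℝ,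
        (∃ i, i ≠ 0 ∧ lam 0 < lam i) ∧ v = ∑ i, w i * d (μ i) (lam i)} =
      ⨅ i : {i : Fin n // i ≠ 0},
        (w 0 + w i.1) *
          ((w 0 / (w 0 + w i.1)) *
              d (μ 0) ((w 0 / (w 0 + w i.1)) * μ 0 + (1 - w 0 / (w 0 + w i.1)) * μ i.1) +
            (1 - w 0 / (w 0 + w i.1)) *
              d (μ i.1) ((w 0 / (w 0 + w i.1)) * μ 0 + (1 - w 0 / (w 0 + w i.1)) * μ i.1)) := by
  obtain rfl : d = expFamKL V := funext₂ hd
  have : Nonempty {i : Fin n // i ≠ 0} := ⟨⟨⟨1, hn⟩, by simp [Fin.ext_iff]⟩⟩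
  have harm (i : {i : Fin n // i ≠ 0}) :
      IsGLB {s | ∃ lam : Fin n → ℝ, lam 0 < lam i ∧ s = ∑ j, w j * expFamKL V (μ j) (lam j)}
        ((w 0 + w i) * jensenShannon V (w 0 / (w 0 + w i)) (μ 0) (μ i)) :=
    isGLB_sum_of_isGLB_pair (expFamKL_self V) (expFamKL_nonneg hVpos hVc) hw0 i.2.symm
      (isGLB_weighted_expFamKL hVpos hVc (hw0 0) (hw0 i) (hμ i i.2).le)
  have hunion : {v : ℝ | ∃ lam : Fin n → ℝ,
      (∃ i, i ≠ 0 ∧ lam 0 < lam i) ∧ v = ∑ i, w i * expFamKL V (μ i) (lam i)} =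
      ⋃ i : {i : Fin n // i ≠ 0},
        {s | ∃ lam : Fin n → ℝ, lam 0 < lam i ∧ s = ∑ j, w j * expFamKL V (μ j) (lam j)} := by
    ext v
    simp only [mem_iUnion]
    constructor
    · rintro ⟨lam, ⟨i, hi, hlt⟩, rfl⟩
      exact ⟨⟨i, hi⟩, lam, hlt, rfl⟩
    · rintro ⟨i, lam, hlt, rfl⟩
      exact ⟨lam, ⟨i, i.2, hlt⟩, rfl⟩
  have hglb := (isGLB_iUnion_iff_of_isGLB harm _).1 (isGLB_ciInf (finite_range _).bddBelow)
  rw [hunion]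
  exact hglb.csInf_eq hglb.nonempty

theorem stmt9 (n : ℕ) [NeZero n] (hn : 2 ≤ n) (V : ℝ → ℝ) (hVpos : ∀ z, 0 < V z)
    (hVc : Continuous V)
    (d : ℝ → ℝ → ℝ) (hd : ∀ x y, d x y = ∫ z in x..y, (z - x) / V z)
    (μ : Fin n → ℝ) (hμ : ∀ i, i ≠ 0 → μ i < μ 0)
    (w : Fin n → ℝ) (hw0 : ∀ i, 0 ≤ w i) (hw1 : ∑ i, w i = 1) :
    sInf {v : ℝ | ∃ lam : Fin n → ℝ,
        (∃ i, i ≠ 0 ∧ lam 0 < lam i) ∧ v = ∑ i, w i * d (μ i) (lam i)} =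
      ⨅ i : {i : Fin n // i ≠ 0},
        (w 0 + w i.1) *
          ((w 0 / (w 0 + w i.1)) *
              d (μ 0) ((w 0 / (w 0 + w i.1)) * μ 0 + (1 - w 0 / (w 0 + w i.1)) * μ i.1) +
            (1 - w 0 / (w 0 + w i.1)) *
              d (μ i.1) ((w 0 / (w 0 + w i.1)) * μ 0 + (1 - w 0 / (w 0 + w i.1)) * μ i.1)) :=
  stmt9_general n hn V hVpos hVc d hd μ hμ w hw0
end

section
/- Let μ̂_n be the empirical mean of n i.i.d. samples from a one-parameter exponential-family distribution with mean μ. For any integers N ≤ M, any x ≥ μ, P(∃ n with N ≤ n ≤ M such that μ̂_n ≥ x) ≤ exp(−N(x−μ)²/(2V₁)), where V₁ is the maximum variance among distributions in the family with mean in [μ, x]. -/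
/-!
Tilting the base measure turns the family into `ν θ = ρ.tilted (θ * ·)`, with `b` the cumulant
generating function of `ρ`: `b'` is the mean and `b''` the variance of `ν θ`. For
`λ = (x - μ) / V₁`, the variables `exp (λ Xᵢ - (b (θ₀ + λ) - b θ₀))` are independent with mean
one, so their partial products form a nonnegative martingale and Doob's maximal inequality
bounds the probability that one of them exceeds `exp (N (λ x - b (θ₀ + λ) + b θ₀))`, which the
product up to time `n` does whenever `N ≤ n` and `μ̂ₙ ≥ x`. Finally
`λ x - b (θ₀ + λ) + b θ₀ ≥ (x - μ)² / (2 V₁)`, because `b'' ≤ V₁` as long as the mean `b'` stays in `[μ, x]`, which it does on `[θ₀, θ₀ + λ]`.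
-/

open MeasureTheory ProbabilityTheory Real Set Finset

lemma le_of_hasDerivAt_le_hasDerivAt {f f' B B' : ℝ → ℝ} {a b : ℝ}
    (hf : ∀ s, HasDerivAt f (f' s) s) (hB : ∀ s, HasDerivAt B (B' s) s) (ha : f a ≤ B a)
    (h : ∀ s ∈ Ico a b, f' s ≤ B' s) : ∀ ⦃s⦄, s ∈ Icc a b → f s ≤ B s :=
  image_le_of_deriv_right_le_deriv_boundary
    (fun s _ => (hf s).continuousAt.continuousWithinAt) (fun s _ => (hf s).hasDerivWithinAt) ha
    (fun s _ => (hB s).continuousAt.continuousWithinAt) (fun s _ => (hB s).hasDerivWithinAt) h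

section SecondDerivativeBound

variable {f f' f'' : ℝ → ℝ} {a x V : ℝ}

lemma deriv_le_add_mul_of_deriv2_le_of_le (hf' : ∀ s, HasDerivAt f' (f'' s) s)
    (hmono : Monotone f') (hbound : ∀ s, f' s ∈ Icc (f' a) x → f'' s ≤ V) {t : ℝ}
    (ht : ∀ s ∈ Icc a t, f' s ≤ x) : ∀ ⦃s⦄, s ∈ Icc a t → f' s ≤ f' a + V * (s - a) :=
  le_of_hasDerivAt_le_hasDerivAt hf'
    (fun s => ((hasDerivAt_id s).sub_const a).const_mul V |>.const_add (f' a) |>.congr_deriv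
      (by ring))
    (by simp)
    (fun s hs => hbound s ⟨hmono hs.1, ht s (Ico_subset_Icc_self hs)⟩)

lemma deriv_le_add_mul_of_deriv2_le (hV : 0 < V) (hf' : ∀ s, HasDerivAt f' (f'' s) s)
    (hmono : Monotone f') (hbound : ∀ s, f' s ∈ Icc (f' a) x → f'' s ≤ V) :
    ∀ ⦃s⦄, s ∈ Icc a (a + (x - f' a) / V) → f' s ≤ f' a + V * (s - a) := by
  set t := a + (x - f' a) / V
  have hVt : f' a + V * (t - a) = x := by simp only [t]; field_simp; ring
  refine deriv_le_add_mul_of_deriv2_le_of_le hf' hmono hbound fun s hs => ?_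
  by_contra! hxs
  have hx : f' a ≤ x := by
    have : 0 ≤ (x - f' a) / V := by linarith [hs.1.trans hs.2]
    linarith [(le_div_iff₀ hV).mp this]
  -- if `f'` reaches `x` at `τ ≤ s`, then `f' ≤ x` on `[a, τ]` by monotonicity, so `f'' ≤ V` there,
  -- which forces `τ ≥ t`
  obtain ⟨τ, hτ, hτx⟩ : ∃ τ ∈ Icc a s, f' τ = x :=
    intermediate_value_Icc hs.1 (HasDerivAt.continuousOn fun s _ => hf' s) ⟨hx, hxs.le⟩
  have hτ_le : f' τ ≤ f' a + V * (τ - a) :=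
    deriv_le_add_mul_of_deriv2_le_of_le hf' hmono hbound
      (fun u hu => hτx ▸ hmono hu.2) (right_mem_Icc.2 hτ.1)
  have : t ≤ τ := by nlinarith
  have : τ = s := le_antisymm hτ.2 (by linarith [hs.2])
  exact hxs.ne' (this ▸ hτx)

lemma sq_div_le_mul_sub_of_deriv2_le (hV : 0 < V) (hf : ∀ s, HasDerivAt f (f' s) s)
    (hf' : ∀ s, HasDerivAt f' (f'' s) s) (hmono : Monotone f')
    (hbound : ∀ s, f' s ∈ Icc (f' a) x → f'' s ≤ V) (hx : f' a ≤ x) :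
    (x - f' a) ^ 2 / (2 * V) ≤ (x - f' a) / V * x - (f (a + (x - f' a) / V) - f a) := by
  set l := (x - f' a) / V
  have hl : 0 ≤ l := div_nonneg (by linarith) hV.le
  have key := le_of_hasDerivAt_le_hasDerivAt
    (B := fun s => f a + f' a * (s - a) + V * (s - a) ^ 2 / 2) (B' := fun s => f' a + V * (s - a))
    hf
    (fun s => by
      have hlin : HasDerivAt (fun s => s - a) 1 s := (hasDerivAt_id' s).sub_const a
      exact ((hlin.const_mul (f' a)).const_add (f a)).add
        ((hlin.pow 2).const_mul V |>.div_const 2) |>.congr_deriv (by ring))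
    (by simp)
    (fun s hs => deriv_le_add_mul_of_deriv2_le hV hf' hmono hbound (Ico_subset_Icc_self hs))
    (right_mem_Icc.2 (le_add_of_nonneg_right hl))
  have hsq : (x - f' a) ^ 2 / (2 * V) = l * x - (l * f' a + V * l ^ 2 / 2) := by
    simp only [l]; field_simp; ring
  simp only [add_sub_cancel_left] at key
  linarith

end SecondDerivativeBound

lemma integrable_of_isFiniteMeasure_withDensity_ofReal {α : Type*} [MeasurableSpace α]
    {μ : Measure α} {g : α → ℝ} (hg : Measurable g) (hg0 : 0 ≤ g)
    [IsFiniteMeasure (μ.withDensity fun a => ENNReal.ofReal (g a))] : Integrable g μ := by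
  refine (lintegral_ofReal_ne_top_iff_integrable hg.aestronglyMeasurable
    (Filter.Eventually.of_forall hg0)).1 ?_
  rw [← setLIntegral_univ, ← withDensity_apply _ MeasurableSet.univ]
  exact measure_ne_top _ _

namespace ProbabilityTheory

section CumulantGeneratingFunction

variable {Ω : Type*} [MeasurableSpace Ω] {μ : Measure Ω} {X : Ω → ℝ}

lemma mgf_tilted_mul [NeZero μ] {t u : ℝ} (ht : Integrable (fun ω => exp (t * X ω)) μ)
    (htu : Integrable (fun ω => exp ((t + u) * X ω)) μ) :
    mgf X (μ.tilted (t * X ·)) u = exp (cgf X μ (t + u) - cgf X μ t) := by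
  rw [mgf, integral_exp_tilted, exp_sub, exp_cgf ht, exp_cgf htu, mgf, mgf]
  simp only [Pi.add_apply, add_mul]

variable (hX : ∀ t, Integrable (fun ω => exp (t * X ω)) μ)
include hX

lemma interior_integrableExpSet_eq_univ : interior (integrableExpSet X μ) = univ := by
  rw [show integrableExpSet X μ = univ from eq_univ_of_forall hX, interior_univ]

lemma hasDerivAt_cgf (t : ℝ) : HasDerivAt (cgf X μ) (deriv (cgf X μ) t) t :=
  (analyticAt_cgf (by simp [interior_integrableExpSet_eq_univ hX])).differentiableAt.hasDerivAt

lemma hasDerivAt_deriv_cgf (t : ℝ) :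
    HasDerivAt (deriv (cgf X μ)) (iteratedDeriv 2 (cgf X μ) t) t := by
  rw [iteratedDeriv_succ, iteratedDeriv_one]
  exact (analyticAt_cgf (by simp [interior_integrableExpSet_eq_univ hX])).deriv
    |>.differentiableAt.hasDerivAt

lemma monotone_deriv_cgf : Monotone (deriv (cgf X μ)) :=
  monotone_of_hasDerivAt_nonneg (hasDerivAt_deriv_cgf hX) fun t => by
    rw [← variance_tilted_mul (by simp [interior_integrableExpSet_eq_univ hX])]
    exact variance_nonneg _ _

end CumulantGeneratingFunction

section ExponentialFamily

variable {ρ : Measure ℝ} {b : ℝ → ℝ} {ν : ℝ → Measure ℝ}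
  (hν : ∀ θ, ν θ = ρ.withDensity fun y => ENNReal.ofReal (exp (y * θ - b θ)))
  (hprob : ∀ θ, IsProbabilityMeasure (ν θ))
include hν hprob

lemma integrable_exp_mul_of_withDensity (θ : ℝ) : Integrable (fun y => exp (θ * y)) ρ := by
  have : IsFiniteMeasure (ρ.withDensity fun y => ENNReal.ofReal (exp (y * θ - b θ))) :=
    hν θ ▸ inferInstance
  have h := (integrable_of_isFiniteMeasure_withDensity_ofReal (μ := ρ)
    (g := fun y => exp (y * θ - b θ)) (by fun_prop) fun y => (exp_pos _).le).const_mul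
    (exp (b θ))
  refine h.congr (Filter.Eventually.of_forall fun y => ?_)
  simp only [← exp_add, mul_comm θ]
  ring_nf

lemma neZero_of_withDensity : NeZero ρ :=
  ⟨fun h => by simpa [hν 0, h] using (hprob 0).measure_univ⟩

variable (hb : ∀ θ, b θ = Real.log (∫ y, Real.exp (y * θ) ∂ρ))
include hb

lemma eq_tilted_of_withDensity (θ : ℝ) : ν θ = ρ.tilted (θ * id ·) := by
  ext s hs
  rw [hν, withDensity_apply _ hs,
    tilted_mul_apply_cgf' (X := id) hs (integrable_exp_mul_of_withDensity hν hprob θ)]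
  simp only [hb, cgf, mgf, id, mul_comm θ]

lemma integral_id_eq_deriv_cgf (θ : ℝ) : ∫ y, y ∂ν θ = deriv (cgf id ρ) θ := by
  rw [eq_tilted_of_withDensity hν hprob hb]
  exact integral_tilted_mul_self (by
    simp [interior_integrableExpSet_eq_univ (X := id)
      (integrable_exp_mul_of_withDensity hν hprob)])

lemma integral_sq_sub_eq_iteratedDeriv_cgf (θ : ℝ) :
    ∫ y, (y - ∫ z, z ∂ν θ) ^ 2 ∂ν θ = iteratedDeriv 2 (cgf id ρ) θ := by
  rw [← variance_tilted_mul (by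
      simp [interior_integrableExpSet_eq_univ (X := id)
        (integrable_exp_mul_of_withDensity hν hprob)]),
    variance_eq_integral measurable_id.aemeasurable, ← eq_tilted_of_withDensity hν hprob hb]
  rfl

end ExponentialFamily

variable {Ω : Type*} [MeasurableSpace Ω] {P : Measure Ω}

lemma _root_.MeasureTheory.Submartingale.measure_le_sup'_le [IsFiniteMeasure P]
    {f : ℕ → Ω → ℝ} {𝒢 : Filtration ℕ ‹_›} (hsub : Submartingale f 𝒢 P) (hnonneg : 0 ≤ f)
    {ε : ℝ} (hε : 0 < ε) (n : ℕ) :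
    P {ω | ε ≤ (range (n + 1)).sup' nonempty_range_add_one fun k => f k ω} ≤
      ENNReal.ofReal ((∫ ω, f n ω ∂P) / ε) := by
  have hdoob := maximal_ineq hsub hnonneg (ε := ε.toNNReal) n
  rw [Real.coe_toNNReal _ hε.le] at hdoob
  rw [ENNReal.ofReal_div_of_pos hε, ENNReal.le_div_iff_mul_le (by simp [hε]) (by simp), mul_comm]
  refine (hdoob.trans (ENNReal.ofReal_le_ofReal ?_)).trans_eq' rfl
  exact setIntegral_le_integral (hsub.integrable n) (Filter.Eventually.of_forall (hnonneg n))

section ProductMartingale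

variable {Z : ℕ → Ω → ℝ}

lemma iIndepFun.integrable_prod_range (hind : iIndepFun Z P) (hZ : ∀ i, Measurable (Z i))
    (hint : ∀ i, Integrable (Z i) P) (n : ℕ) : Integrable (∏ i ∈ range n, Z i) P := by
  have := hind.isProbabilityMeasure
  induction n with
  | zero => rw [prod_range_zero]; exact integrable_const 1
  | succ n ih =>
    rw [prod_range_succ]
    exact (hind.indepFun_prod_range_succ hZ n).integrable_mul ih (hint n)

lemma iIndepFun.martingale_prod_range (hind : iIndepFun Z P) (hZ : ∀ i, StronglyMeasurable (Z i))
    (hint : ∀ i, Integrable (Z i) P) (hmean : ∀ i, P[Z i] = 1) :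
    Martingale (fun n => ∏ i ∈ range (n + 1), Z i) (Filtration.natural Z hZ) P := by
  have := hind.isProbabilityMeasure
  set 𝒢 := Filtration.natural Z hZ
  have hadapted : StronglyAdapted 𝒢 fun n => ∏ i ∈ range (n + 1), Z i := fun n =>
    Finset.stronglyMeasurable_prod _ fun i hi =>
      (Filtration.stronglyAdapted_natural hZ i).mono (𝒢.mono (mem_range_succ_iff.1 hi))
  have hintprod := hind.integrable_prod_range (fun i => (hZ i).measurable) hint
  refine martingale_nat hadapted (fun n => hintprod (n + 1)) fun n => ?_
  have hsplit : ∏ i ∈ range (n + 1 + 1), Z i = (∏ i ∈ range (n + 1), Z i) * Z (n + 1) :=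
    prod_range_succ _ _
  have hnext : P[Z (n + 1) | 𝒢 n] =ᵐ[P] fun _ => 1 := by
    rw [← hmean (n + 1)]
    exact condExp_indep_eq (hZ (n + 1)).measurable.comap_le (𝒢.le n)
      (comap_measurable (Z (n + 1))).stronglyMeasurable
      (hind.indep_comap_natural_of_lt hZ (Nat.lt_succ_self n))
  rw [hsplit]
  refine (condExp_mul_of_stronglyMeasurable_left (hadapted n) (hsplit ▸ hintprod _)
    (hint (n + 1)) |>.trans ?_).symm
  filter_upwards [hnext] with ω hω
  simp [hω]

end ProductMartingale

theorem measure_exists_mean_ge_le [IsProbabilityMeasure P] {X : ℕ → Ω → ℝ}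
    (hmeas : ∀ i, Measurable (X i)) (hindep : iIndepFun X P) {l c x : ℝ} (hl : 0 ≤ l) (hmgf : ∀ i, mgf (X i) P l = exp c)
    (hxc : c ≤ l * x) {N : ℕ} (hN : 0 < N) (M : ℕ) :
    P {ω | ∃ n, N ≤ n ∧ n ≤ M ∧ x ≤ (∑ i ∈ range n, X i ω) / n} ≤
      ENNReal.ofReal (exp (-(N * (l * x - c)))) := by
  set Z : ℕ → Ω → ℝ := fun i ω => exp (l * X i ω - c)
  have hZ : ∀ i, StronglyMeasurable (Z i) := fun i =>
    (((hmeas i).const_mul l).sub_const c).exp.stronglyMeasurable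
  have hZint : ∀ i, Integrable (Z i) P := fun i => by
    simp_rw [Z, exp_sub]
    exact (mgf_pos_iff.1 ((hmgf i).symm ▸ exp_pos c)).div_const _
  have hZmean : ∀ i, P[Z i] = 1 := fun i => by
    simp_rw [Z, exp_sub, integral_div]
    rw [← mgf, hmgf, div_self (exp_pos c).ne']
  have hZind : iIndepFun Z P := hindep.comp (fun _ y => exp (l * y - c)) fun _ => by fun_prop
  have hmart := hZind.martingale_prod_range hZ hZint hZmean
  set F := fun n => ∏ i ∈ range (n + 1), Z i
  have hF : ∀ n ω, F n ω = exp (l * ∑ i ∈ range (n + 1), X i ω - ((n + 1 : ℕ) : ℝ) * c) := by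
    intro n ω
    simp only [F, Z, prod_apply, ← exp_sum, sum_sub_distrib, mul_sum, sum_const, card_range,
      nsmul_eq_mul]
  -- `F k` multiplies the first `k + 1` factors, so sample size `n` is index `n - 1`
  have hevent : {ω | ∃ n, N ≤ n ∧ n ≤ M ∧ x ≤ (∑ i ∈ range n, X i ω) / n} ⊆
      {ω | exp (N * (l * x - c)) ≤ (range (M - 1 + 1)).sup' nonempty_range_add_one
        fun k => F k ω} := by
    rintro ω ⟨n, hNn, hnM, hxn⟩
    have hn : 0 < n := hN.trans_le hNn
    have hSn : x * n ≤ ∑ i ∈ range n, X i ω := (le_div_iff₀ (by exact_mod_cast hn)).1 hxn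
    refine le_trans ?_ (le_sup' (fun k => F k ω) (mem_range.2 (by omega : n - 1 < M - 1 + 1)))
    rw [hF, Nat.sub_add_cancel hn, exp_le_exp]
    have hNn' : (N : ℝ) ≤ n := by exact_mod_cast hNn
    nlinarith [mul_le_mul_of_nonneg_left hSn hl]
  have hFmean : ∫ ω, F (M - 1) ω ∂P = 1 := by
    rw [← setIntegral_univ, ← hmart.setIntegral_eq (Nat.zero_le _) MeasurableSet.univ,
      setIntegral_univ, ← hZmean 0]
    simp [F]
  refine (measure_mono hevent).trans
    ((hmart.submartingale.measure_le_sup'_le ?_ (exp_pos _) _).trans_eq ?_)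
  · intro n ω
    simpa [hF] using (exp_pos _).le
  · rw [hFmean, one_div, exp_neg]

end ProbabilityTheory

theorem stmt16_general {Ω : Type*} [MeasureSpace Ω] [IsProbabilityMeasure (ℙ : Measure Ω)]
    (ρ : Measure ℝ) (b : ℝ → ℝ)
    (hb : ∀ θ, b θ = Real.log (∫ y, Real.exp (y * θ) ∂ρ))
    (ν : ℝ → Measure ℝ)
    (hν : ∀ θ, ν θ = ρ.withDensity fun y => ENNReal.ofReal (Real.exp (y * θ - b θ)))
    (hprob : ∀ θ, IsProbabilityMeasure (ν θ))
    (θ₀ μ : ℝ) (hμ : μ = ∫ y, y ∂ν θ₀)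
    (X : ℕ → Ω → ℝ) (hmeas : ∀ i, Measurable (X i))
    (hlaw : ∀ i, Measure.map (X i) ℙ = ν θ₀)
    (hindep : iIndepFun X ℙ)
    (x V₁ : ℝ) (hx : μ ≤ x) (hV₁ : 0 < V₁)
    (hvar : ∀ θ, (∫ y, y ∂ν θ) ∈ Set.Icc μ x →
      ∫ y, (y - ∫ z, z ∂ν θ) ^ 2 ∂ν θ ≤ V₁)
    (N M : ℕ) (hN : 0 < N) :
    ℙ {ω | ∃ n, N ≤ n ∧ n ≤ M ∧ x ≤ (∑ i ∈ Finset.range n, X i ω) / n} ≤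
      ENNReal.ofReal (Real.exp (-(N : ℝ) * (x - μ) ^ 2 / (2 * V₁))) := by
  have hexp : ∀ θ, Integrable (fun y => exp (θ * id y)) ρ :=
    integrable_exp_mul_of_withDensity hν hprob
  have := neZero_of_withDensity hν hprob
  have hmean := integral_id_eq_deriv_cgf hν hprob hb
  have hbound : ∀ θ, deriv (cgf id ρ) θ ∈ Icc μ x → iteratedDeriv 2 (cgf id ρ) θ ≤ V₁ :=
    fun θ hθ => integral_sq_sub_eq_iteratedDeriv_cgf hν hprob hb θ ▸ hvar θ (hmean θ ▸ hθ)
  rw [hmean] at hμ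
  subst hμ
  set l := (x - deriv (cgf id ρ) θ₀) / V₁
  have hmgf : ∀ i, mgf (X i) ℙ l = exp (cgf id ρ (θ₀ + l) - cgf id ρ θ₀) := fun i => by
    rw [← mgf_id_map (hmeas i).aemeasurable, hlaw, eq_tilted_of_withDensity hν hprob hb,
      mgf_tilted_mul (hexp θ₀) (hexp _)]
  have hkey := sq_div_le_mul_sub_of_deriv2_le hV₁ (hasDerivAt_cgf hexp)
    (hasDerivAt_deriv_cgf hexp) (monotone_deriv_cgf hexp) hbound hx
  have hxc : cgf id ρ (θ₀ + l) - cgf id ρ θ₀ ≤ l * x := by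
    linarith [div_nonneg (sq_nonneg (x - deriv (cgf id ρ) θ₀)) (mul_pos two_pos hV₁).le]
  refine (measure_exists_mean_ge_le hmeas hindep (div_nonneg (by linarith) hV₁.le) hmgf hxc hN
    M).trans (ENNReal.ofReal_le_ofReal (exp_le_exp.2 ?_))
  rw [neg_mul, neg_div, mul_div_assoc, neg_le_neg_iff]
  exact mul_le_mul_of_nonneg_left hkey (Nat.cast_nonneg N)

/-- Maximal inequality for the empirical mean of i.i.d. samples from a
one-parameter exponential-family distribution, with variance bounded by `V₁`
on the mean interval `[μ, x]`. -/
theorem stmt16 {Ω : Type*} [MeasureSpace Ω] [IsProbabilityMeasure (ℙ : Measure Ω)]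
    (ρ : Measure ℝ) (b : ℝ → ℝ)
    (hb : ∀ θ, b θ = Real.log (∫ y, Real.exp (y * θ) ∂ρ))
    (ν : ℝ → Measure ℝ)
    (hν : ∀ θ, ν θ = ρ.withDensity fun y => ENNReal.ofReal (Real.exp (y * θ - b θ)))
    (hprob : ∀ θ, IsProbabilityMeasure (ν θ))
    (θ₀ μ : ℝ) (hμ : μ = ∫ y, y ∂ν θ₀)
    (X : ℕ → Ω → ℝ) (hmeas : ∀ i, Measurable (X i))
    (hlaw : ∀ i, Measure.map (X i) ℙ = ν θ₀)
    (hindep : iIndepFun X ℙ)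
    (x V₁ : ℝ) (hx : μ ≤ x) (hV₁ : 0 < V₁)
    (hvar : ∀ θ, (∫ y, y ∂ν θ) ∈ Set.Icc μ x →
      ∫ y, (y - ∫ z, z ∂ν θ) ^ 2 ∂ν θ ≤ V₁)
    (N M : ℕ) (hN : 0 < N) (hNM : N ≤ M) :
    ℙ {ω | ∃ n, N ≤ n ∧ n ≤ M ∧ x ≤ (∑ i ∈ Finset.range n, X i ω) / n} ≤
      ENNReal.ofReal (Real.exp (-(N : ℝ) * (x - μ) ^ 2 / (2 * V₁))) :=
  stmt16_general ρ b hb ν hν hprob θ₀ μ hμ X hmeas hlaw hindep x V₁ hx hV₁ hvar N M hN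
end
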